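/- Let n ≥ 1 and let K := Sp_{2n}(ℝ) ∩ O_{2n}(ℝ). Every g ∈ Sp_{2n}(ℝ) can be written as g = q · 1(t) · k with q ∈ [P,P](ℝ), t ∈ ℝ_{>0}, and k ∈ K, where 1(t) := diag(t^{−1}, I_{n−1}, t, I_{n−1}); moreover the positive real number t is uniquely determined by g. Equivalently, Sp_{2n}(ℝ) is the disjoint union over t ∈ ℝ_{>0} of the double cosets [P,P](ℝ)·1(t)·K. -/

import Mathlib

/-!
Write `c, d` for the lower blocks of `g`. Since `g` is invertible, `M := c cᵀ + d dᵀ = (g gᵀ)₂₂`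
is positive definite, and `g` symplectic means the rows of `(c d)` span a Lagrangian subspace
(`c dᵀ = d cᵀ`). With `D := √M`, the complex matrix `D⁻¹ (d + i c)` is unitary, so its
realification `k` is orthogonal and symplectic, and `g kᵀ` has lower blocks `(0 D)`. Splitting off
`1(det D)` then leaves an element of `[P,P]`. Conversely, if `g = q · 1(t) · k`, then
`(g gᵀ)₂₂ = (q · 1(t²) · qᵀ)₂₂` has determinant `t²`, which determines `t > 0`.
-/

open Matrix

/-- The standard symplectic structure matrix `J = (0, Iₙ; -Iₙ, 0)`. -/
def Jmat (F : Type*) [Field F] (n : ℕ) : Matrix (Fin n ⊕ Fin n) (Fin n ⊕ Fin n) F :=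
  Matrix.fromBlocks 0 1 (-1) 0

/-- `Sp_{2n}(F) = {g : g * J⁻¹ * gᵀ * J = 1}`. -/
def Sp (F : Type*) [Field F] (n : ℕ) : Set (Matrix (Fin n ⊕ Fin n) (Fin n ⊕ Fin n) F) :=
  {g | g * (Jmat F n)⁻¹ * gᵀ * Jmat F n = 1}

/-- `[P,P](F)`: elements of `Sp_{2n}(F)` of block form `(A, B; 0, (Aᵀ)⁻¹)` with `det A = 1`. -/
def SiegelPP (F : Type*) [Field F] (n : ℕ) :
    Set (Matrix (Fin n ⊕ Fin n) (Fin n ⊕ Fin n) F) :=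
  {g | g ∈ Sp F n ∧ ∃ A B : Matrix (Fin n) (Fin n) F,
    g = Matrix.fromBlocks A B 0 Aᵀ⁻¹ ∧ A.det = 1}

/-- The diagonal matrix `1(t) = diag(t^{−1}, I_{n−1}, t, I_{n−1})`. -/
noncomputable def oneMat (n : ℕ) (t : ℝ) : Matrix (Fin n ⊕ Fin n) (Fin n ⊕ Fin n) ℝ :=
  Matrix.diagonal (Sum.elim
    (fun i : Fin n => if (i : ℕ) = 0 then t⁻¹ else 1)
    (fun i : Fin n => if (i : ℕ) = 0 then t else 1))

namespace Matrix

variable {l m R : Type*} [Fintype l] [Fintype m] [CommRing R]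

lemma toBlocks₂₂_mul_transpose (g : Matrix (l ⊕ m) (l ⊕ m) R) :
    (g * gᵀ).toBlocks₂₂ = g.toBlocks₂₁ * g.toBlocks₂₁ᵀ + g.toBlocks₂₂ * g.toBlocks₂₂ᵀ := by
  conv_lhs => rw [← fromBlocks_toBlocks g]
  simp [fromBlocks_transpose, fromBlocks_multiply]

lemma toBlocks₂₁_mul_diagonal [DecidableEq l] [DecidableEq m] (p : Matrix (l ⊕ m) (l ⊕ m) R)
    (v : l ⊕ m → R) : (p * diagonal v).toBlocks₂₁ = p.toBlocks₂₁ * diagonal (v ∘ Sum.inl) := by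
  ext i j
  simp [toBlocks₂₁, mul_diagonal]

lemma toBlocks₂₂_mul_diagonal [DecidableEq l] [DecidableEq m] (p : Matrix (l ⊕ m) (l ⊕ m) R)
    (v : l ⊕ m → R) : (p * diagonal v).toBlocks₂₂ = p.toBlocks₂₂ * diagonal (v ∘ Sum.inr) := by
  ext i j
  simp [toBlocks₂₂, mul_diagonal]

lemma posDef_toBlocks₂₂_mul_transpose [DecidableEq l] [DecidableEq m]
    {g : Matrix (l ⊕ m) (l ⊕ m) ℝ} (hg : IsUnit g) : (g * gᵀ).toBlocks₂₂.PosDef := by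
  have h := PosDef.mul_conjTranspose_self g (vecMul_injective_iff_isUnit.mpr hg)
  rw [conjTranspose_eq_transpose_of_trivial] at h
  exact h.submatrix Sum.inr_injective

open scoped MatrixOrder in
lemma PosDef.exists_mul_transpose_eq [DecidableEq m] {M : Matrix m m ℝ} (hM : M.PosDef) :
    ∃ D : Matrix m m ℝ, D * Dᵀ = M ∧ 0 < D.det := by
  have hD : (CFC.sqrt M).PosSemidef := (CFC.sqrt_nonneg M).posSemidef
  have hDT : (CFC.sqrt M)ᵀ = CFC.sqrt M := by
    rw [← conjTranspose_eq_transpose_of_trivial]; exact hD.1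
  have hDD : CFC.sqrt M * CFC.sqrt M = M := CFC.sqrt_mul_sqrt_self M hM.posSemidef.nonneg
  refine ⟨CFC.sqrt M, by rw [hDT, hDD], hD.det_nonneg.lt_of_ne fun h0 => ?_⟩
  have := hM.det_pos
  rw [← hDD, det_mul, ← h0, mul_zero] at this
  exact this.false

end Matrix

lemma mem_sp_iff_mem_symplecticGroup {F : Type*} [Field F] {n : ℕ}
    {g : Matrix (Fin n ⊕ Fin n) (Fin n ⊕ Fin n) F} :
    g ∈ Sp F n ↔ g ∈ symplecticGroup (Fin n) F := by
  have hJmat : Jmat F n = -J (Fin n) F := by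
    simp [Jmat, J, fromBlocks_neg]
  have hJmat_inv : (Jmat F n)⁻¹ = J (Fin n) F :=
    inv_eq_right_inv (by rw [hJmat, Matrix.neg_mul, J_squared, neg_neg])
  simp only [Sp, Set.mem_ofPred_eq, SymplecticGroup.mem_iff, hJmat_inv]
  rw [hJmat, Matrix.mul_neg, neg_eq_iff_eq_neg, ← J_squared]
  constructor
  · intro h
    simpa [Matrix.mul_assoc, J_squared] using congrArg (· * J (Fin n) F) h
  · intro h
    rw [h]

namespace SymplecticGroup

variable {l R : Type*} [Fintype l] [DecidableEq l] [CommRing R]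

lemma toBlocks₂₁_mul_transpose_toBlocks₂₂ {g : Matrix (l ⊕ l) (l ⊕ l) R}
    (hg : g ∈ symplecticGroup l R) :
    g.toBlocks₂₁ * g.toBlocks₂₂ᵀ = g.toBlocks₂₂ * g.toBlocks₂₁ᵀ := by
  have h := transpose_mem hg
  rw [← fromBlocks_toBlocks g, fromBlocks_transpose, fromBlocks_mem_iff] at h
  simpa only [transpose_transpose] using h.2.1

lemma transpose_toBlocks₁₁_mul_toBlocks₂₂ {g : Matrix (l ⊕ l) (l ⊕ l) R}
    (hg : g ∈ symplecticGroup l R) (h₂₁ : g.toBlocks₂₁ = 0) :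
    g.toBlocks₁₁ᵀ * g.toBlocks₂₂ = 1 := by
  rw [← fromBlocks_toBlocks g, fromBlocks_mem_iff, h₂₁] at hg
  simpa using hg.2.2

/-- `fromBlocks x (-y) y x` is the realification of the complex matrix `x + i y`; the
hypotheses say that `x + i y` is unitary. -/
lemma realification_mem {x y : Matrix l l R} (hunit : x * xᵀ + y * yᵀ = 1)
    (hsymm : x * yᵀ = y * xᵀ) : fromBlocks x (-y) y x ∈ symplecticGroup l R := by
  rw [← transpose_mem_iff, fromBlocks_transpose, fromBlocks_mem_iff]
  simp only [transpose_transpose, transpose_neg, Matrix.mul_neg, Matrix.neg_mul, sub_neg_eq_add]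
  exact ⟨by rw [hsymm], hsymm.symm, hunit⟩

lemma realification_mul_transpose {x y : Matrix l l R} (hunit : x * xᵀ + y * yᵀ = 1)
    (hsymm : x * yᵀ = y * xᵀ) : fromBlocks x (-y) y x * (fromBlocks x (-y) y x)ᵀ = 1 := by
  rw [fromBlocks_transpose, fromBlocks_multiply, ← fromBlocks_one]
  simp [hsymm, hunit, add_comm (y * yᵀ)]

lemma exists_orthogonal_toBlocks₂₁_eq_zero {g : Matrix (l ⊕ l) (l ⊕ l) R}
    (hg : g ∈ symplecticGroup l R) {D : Matrix l l R} (hD : IsUnit D.det)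
    (hgD : (g * gᵀ).toBlocks₂₂ = D * Dᵀ) :
    ∃ k ∈ symplecticGroup l R, k * kᵀ = 1 ∧
      (g * kᵀ).toBlocks₂₁ = 0 ∧ (g * kᵀ).toBlocks₂₂ = D := by
  set c := g.toBlocks₂₁
  set d := g.toBlocks₂₂
  have hcd : c * dᵀ = d * cᵀ := toBlocks₂₁_mul_transpose_toBlocks₂₂ hg
  have hgram : c * cᵀ + d * dᵀ = D * Dᵀ := by rw [← hgD, toBlocks₂₂_mul_transpose]
  have hDT : IsUnit Dᵀ.det := by rwa [det_transpose]
  set x := D⁻¹ * d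
  set y := D⁻¹ * c
  have hunit : x * xᵀ + y * yᵀ = 1 := by
    calc x * xᵀ + y * yᵀ = D⁻¹ * (c * cᵀ + d * dᵀ) * Dᵀ⁻¹ := by
          simp only [x, y, transpose_mul, transpose_nonsing_inv]; noncomm_ring
      _ = 1 := by
          rw [hgram, ← Matrix.mul_assoc, nonsing_inv_mul _ hD, Matrix.one_mul,
            mul_nonsing_inv _ hDT]
  have hsymm : x * yᵀ = y * xᵀ := by
    simp only [x, y, transpose_mul, transpose_nonsing_inv, Matrix.mul_assoc]
    rw [← Matrix.mul_assoc d, ← Matrix.mul_assoc c, hcd]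
  refine ⟨fromBlocks x (-y) y x, realification_mem hunit hsymm,
    realification_mul_transpose hunit hsymm, ?_, ?_⟩
  · calc (g * (fromBlocks x (-y) y x)ᵀ).toBlocks₂₁ = (c * dᵀ - d * cᵀ) * Dᵀ⁻¹ := by
          rw [← fromBlocks_toBlocks g, fromBlocks_transpose, fromBlocks_multiply,
            toBlocks_fromBlocks₂₁]
          simp only [x, y, transpose_mul, transpose_nonsing_inv, transpose_neg]
          noncomm_ring
      _ = 0 := by rw [hcd, sub_self, Matrix.zero_mul]
  · calc (g * (fromBlocks x (-y) y x)ᵀ).toBlocks₂₂ = (c * cᵀ + d * dᵀ) * Dᵀ⁻¹ := by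
          rw [← fromBlocks_toBlocks g, fromBlocks_transpose, fromBlocks_multiply,
            toBlocks_fromBlocks₂₂]
          simp only [x, y, transpose_mul, transpose_nonsing_inv]
          noncomm_ring
      _ = D := by rw [hgram, Matrix.mul_assoc, mul_nonsing_inv _ hDT, Matrix.mul_one]

end SymplecticGroup

section

variable {n : ℕ}

lemma mem_siegelPP_of_toBlocks₂₁_eq_zero {F : Type*} [Field F]
    {q : Matrix (Fin n ⊕ Fin n) (Fin n ⊕ Fin n) F} (hq : q ∈ Sp F n) (h₂₁ : q.toBlocks₂₁ = 0)
    (hdet : q.toBlocks₂₂.det = 1) : q ∈ SiegelPP F n := by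
  have h := SymplecticGroup.transpose_toBlocks₁₁_mul_toBlocks₂₂
    (mem_sp_iff_mem_symplecticGroup.mp hq) h₂₁
  refine ⟨hq, q.toBlocks₁₁, q.toBlocks₁₂, ?_, ?_⟩
  · rw [inv_eq_right_inv h, ← h₂₁, fromBlocks_toBlocks]
  · simpa [hdet] using congrArg det h

lemma oneMat_mem_symplecticGroup {t : ℝ} (ht : t ≠ 0) :
    oneMat n t ∈ symplecticGroup (Fin n) ℝ := by
  rw [oneMat, ← fromBlocks_diagonal, SymplecticGroup.fromBlocks_mem_iff]
  refine ⟨by simp, by simp, ?_⟩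
  rw [diagonal_transpose, diagonal_mul_diagonal, transpose_zero, Matrix.zero_mul, sub_zero,
    ← diagonal_one]
  congr 1
  ext i
  split_ifs <;> simp [ht]

lemma oneMat_inv_mul_oneMat {t : ℝ} (ht : t ≠ 0) : oneMat n t⁻¹ * oneMat n t = 1 := by
  rw [oneMat, oneMat, diagonal_mul_diagonal, ← diagonal_one]
  congr 1
  ext (i | i) <;> simp only [Sum.elim_inl, Sum.elim_inr] <;> split_ifs <;> simp [ht]

lemma toBlocks₂₁_mul_oneMat {p : Matrix (Fin n ⊕ Fin n) (Fin n ⊕ Fin n) ℝ}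
    (hp : p.toBlocks₂₁ = 0) (t : ℝ) : (p * oneMat n t).toBlocks₂₁ = 0 := by
  rw [oneMat, toBlocks₂₁_mul_diagonal, hp, Matrix.zero_mul]

lemma det_toBlocks₂₂_mul_oneMat (hn : 1 ≤ n) (p : Matrix (Fin n ⊕ Fin n) (Fin n ⊕ Fin n) ℝ)
    (t : ℝ) : (p * oneMat n t).toBlocks₂₂.det = p.toBlocks₂₂.det * t := by
  obtain ⟨n, rfl⟩ := Nat.exists_eq_add_of_le' hn
  rw [oneMat, toBlocks₂₂_mul_diagonal, det_mul, det_diagonal, Fin.prod_univ_succ]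
  simp

lemma sq_eq_det_toBlocks₂₂_mul_transpose (hn : 1 ≤ n)
    {q k : Matrix (Fin n ⊕ Fin n) (Fin n ⊕ Fin n) ℝ} (hq : q ∈ SiegelPP ℝ n) (hk : k * kᵀ = 1)
    (t : ℝ) :
    t ^ 2 = ((q * oneMat n t * k) * (q * oneMat n t * k)ᵀ).toBlocks₂₂.det := by
  obtain ⟨-, A, B, rfl, hA⟩ := hq
  set p := fromBlocks A B 0 Aᵀ⁻¹ * oneMat n t
  have hp : p.toBlocks₂₁ = 0 := toBlocks₂₁_mul_oneMat (toBlocks_fromBlocks₂₁ ..) t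
  have hpk : (p * k) * (p * k)ᵀ = p * pᵀ := by
    rw [transpose_mul, Matrix.mul_assoc, ← Matrix.mul_assoc k, hk, Matrix.one_mul]
  rw [hpk, toBlocks₂₂_mul_transpose, hp, Matrix.zero_mul, zero_add, det_mul, det_transpose,
    det_toBlocks₂₂_mul_oneMat hn, toBlocks_fromBlocks₂₂, det_nonsing_inv, det_transpose, hA]
  simp [sq]

lemma exists_mem_siegelPP_mul_oneMat_mul (hn : 1 ≤ n)
    {g : Matrix (Fin n ⊕ Fin n) (Fin n ⊕ Fin n) ℝ} (hg : g ∈ Sp ℝ n) :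
    ∃ t : ℝ, 0 < t ∧ ∃ q ∈ SiegelPP ℝ n, ∃ k ∈ Sp ℝ n, k * kᵀ = 1 ∧ g = q * oneMat n t * k := by
  rw [mem_sp_iff_mem_symplecticGroup] at hg
  obtain ⟨D, hDD, hD⟩ := (posDef_toBlocks₂₂_mul_transpose
    ((isUnit_iff_isUnit_det g).mpr (SymplecticGroup.symplectic_det hg))).exists_mul_transpose_eq
  obtain ⟨k, hk, hkk, h₂₁, h₂₂⟩ :=
    SymplecticGroup.exists_orthogonal_toBlocks₂₁_eq_zero hg hD.ne'.isUnit hDD.symm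
  set t := D.det
  refine ⟨t, hD, g * kᵀ * oneMat n t⁻¹, mem_siegelPP_of_toBlocks₂₁_eq_zero ?_
    (toBlocks₂₁_mul_oneMat h₂₁ _) ?_, k, mem_sp_iff_mem_symplecticGroup.mpr hk, hkk, ?_⟩
  · exact mem_sp_iff_mem_symplecticGroup.mpr <| mul_mem (mul_mem hg
      (SymplecticGroup.transpose_mem hk)) (oneMat_mem_symplecticGroup (inv_ne_zero hD.ne'))
  · rw [det_toBlocks₂₂_mul_oneMat hn, h₂₂, mul_inv_cancel₀ hD.ne']
  · rw [Matrix.mul_assoc (g * kᵀ), oneMat_inv_mul_oneMat hD.ne', Matrix.mul_one, Matrix.mul_assoc,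
      mul_eq_one_comm.mp hkk, Matrix.mul_one]

end

theorem real_iwasawa_double_coset (n : ℕ) (hn : 1 ≤ n)
    (g : Matrix (Fin n ⊕ Fin n) (Fin n ⊕ Fin n) ℝ) (hg : g ∈ Sp ℝ n) :
    ∃! t : ℝ, 0 < t ∧ ∃ q ∈ SiegelPP ℝ n, ∃ k ∈ Sp ℝ n,
      k * kᵀ = 1 ∧ g = q * oneMat n t * k := by
  have hsq : ∀ t, (∃ q ∈ SiegelPP ℝ n, ∃ k ∈ Sp ℝ n, k * kᵀ = 1 ∧ g = q * oneMat n t * k) →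
      t ^ 2 = (g * gᵀ).toBlocks₂₂.det := by
    rintro t ⟨q, hq, k, -, hk, rfl⟩
    exact sq_eq_det_toBlocks₂₂_mul_transpose hn hq hk t
  obtain ⟨t, ht, hdec⟩ := exists_mem_siegelPP_mul_oneMat_mul hn hg
  refine ⟨t, ⟨ht, hdec⟩, fun s ⟨hs, hsdec⟩ => ?_⟩
  exact (pow_left_inj₀ hs.le ht.le two_ne_zero).mp ((hsq s hsdec).trans (hsq t hdec).symm)
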